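/- (Accelerated rates) In the setting of the accelerated proximal gradient scheme with b_k = (k+1)/4, B_k = (k+1)(k+2)/8, a_k = (k+1)²/(32L), the condition a_k ≤ (B_k − b_k²)/(2L) holds for all k ≥ 1, and with C̃ := a_0‖G(x^0)‖² + b_0(φ(y^0) − φ̄) + (L/2)‖x* − v^0‖², one has φ(y^k) − φ̄ ≤ 8C̃/((k+1)(k+2)) and min_{0≤i≤k} ‖G(x^i)‖² ≤ 192L·C̃/((k+1)(k+2)(2k+3)) for all k ≥ 1. -/

import Mathlib

open scoped RealInnerProductSpace
open Set Filter Topology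

/-!
Write `p = prox (z - ∇f z / L)`, so that `G z = L (z - p)`. The descent lemma for `f`, the
gradient inequality of the convex `f` and the optimality of the proximal step (`L (z - ∇f z / L - p)`
is a subgradient of `g` at `p`) add up to the fundamental prox-grad inequality
`φ (z - G z / L) ≤ φ u + ⟪G z, z - u⟫ - ‖G z‖² / (2L)` for every `u`.
Using it at `u = x*` with weight `b_{k+1}` and at `u = y^k` with weight `B_k`, together with
`B_{k+1} x^{k+1} = B_k y^k + b_{k+1} v^{k+1}` and `B_{k+1} = B_k + b_{k+1}`, shows that
`B_k (φ(y^k) - φ̄) + (L/2)‖x* - v^{k+1}‖² + ∑_{i ≤ k} a_i ‖G(x^i)‖²` never exceeds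
`(L/2)‖x* - v⁰‖² ≤ C̃` as long as `a_k ≤ (B_k - b_k²)/(2L)`. Both rates are read off from this
bound, the second because `∑_{i ≤ k} a_i = (k+1)(k+2)(2k+3)/(192L)`.
-/

/-- The proximal gradient mapping with step `1/L`: `G(z) = L(z - prox(z - (1/L)∇f z))`. -/
noncomputable def pgmL {E : Type*} [NormedAddCommGroup E] [InnerProductSpace ℝ E]
    (f' : E → E) (prox : E → E) (L : ℝ) (z : E) : E :=
  L • (z - prox (z - (1 / L) • f' z))

section

variable {E : Type*} [NormedAddCommGroup E] [InnerProductSpace ℝ E]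

section Gradient

variable [CompleteSpace E] {f : E → ℝ}

theorem HasGradientAt.hasDerivAt_comp_add_smul {g p d : E} {t : ℝ}
    (hf : HasGradientAt f g (p + t • d)) :
    HasDerivAt (fun s : ℝ => f (p + s • d)) ⟪g, d⟫ t := by
  have hline : HasDerivAt (fun s : ℝ => p + s • d) d t := by
    simpa using ((hasDerivAt_id t).smul_const d).const_add p
  simpa [Function.comp_def] using hf.hasFDerivAt.comp_hasDerivAt t hline

theorem ConvexOn.add_inner_le_of_hasGradientAt (hf : ConvexOn ℝ univ f) {g z : E}
    (hg : HasGradientAt f g z) (u : E) : f z + ⟪g, u - z⟫ ≤ f u := by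
  have hline : ConvexOn ℝ univ (fun t : ℝ => f (z + t • (u - z))) := by
    simpa [Function.comp_def, AffineMap.lineMap_apply_module', add_comm]
      using hf.comp_affineMap (AffineMap.lineMap z u)
  have hderiv : HasDerivAt (fun t : ℝ => f (z + t • (u - z))) ⟪g, u - z⟫ 0 :=
    HasGradientAt.hasDerivAt_comp_add_smul (by simpa using hg)
  have := hline.le_slope_of_hasDerivAt (mem_univ 0) (mem_univ 1) one_pos hderiv
  simp only [slope_def_field, one_smul, add_sub_cancel, zero_smul, add_zero, sub_zero,
    div_one] at this
  linarith

theorem le_add_inner_add_sq_of_lipschitz_gradient {f' : E → E} {L : ℝ}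
    (hf : ∀ x, HasGradientAt f (f' x) x) (hlip : ∀ x y, ‖f' x - f' y‖ ≤ L * ‖x - y‖)
    (p q : E) : f q ≤ f p + ⟪f' p, q - p⟫ + L / 2 * ‖q - p‖ ^ 2 := by
  set d := q - p
  let h : ℝ → ℝ := fun t => f (p + t • d) - t * ⟪f' p, d⟫ - t ^ 2 * (L / 2 * ‖d‖ ^ 2)
  have hderiv (t : ℝ) : HasDerivAt h (⟪f' (p + t • d) - f' p, d⟫ - t * (L * ‖d‖ ^ 2)) t := by
    refine ((((hf _).hasDerivAt_comp_add_smul).sub ((hasDerivAt_id t).mul_const _)).sub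
      ((hasDerivAt_pow 2 t).mul_const (L / 2 * ‖d‖ ^ 2))).congr_deriv ?_
    simp only [inner_sub_left]
    ring
  have hanti : AntitoneOn h (Ici 0) := by
    refine antitoneOn_of_hasDerivWithinAt_nonpos (convex_Ici 0)
      (fun t _ => (hderiv t).continuousAt.continuousWithinAt)
      (fun t _ => (hderiv t).hasDerivWithinAt) fun t ht => ?_
    rw [interior_Ici, mem_Ioi] at ht
    have hlip_t : ‖f' (p + t • d) - f' p‖ ≤ L * (t * ‖d‖) := by
      simpa [norm_smul, abs_of_pos ht] using hlip (p + t • d) p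
    nlinarith [real_inner_le_norm (f' (p + t • d) - f' p) d, norm_nonneg d]
  have := hanti (mem_Ici.mpr le_rfl) (show (0 : ℝ) ≤ 1 from zero_le_one) zero_le_one
  simp only [h, d, one_smul, add_sub_cancel, zero_smul, add_zero] at this
  linarith

end Gradient

theorem ConvexOn.add_inner_le_of_isMinOn_add_norm_sq {g : E → ℝ} (hg : ConvexOn ℝ univ g)
    {c : ℝ} {w p : E} (hp : IsMinOn (fun z => g z + c * ‖z - w‖ ^ 2) univ p) (u : E) :
    g p + 2 * c * ⟪w - p, u - p⟫ ≤ g u := by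
  -- compare `p` with `p + θ • (u - p)` and let `θ → 0⁺`
  have hθ : ∀ θ ∈ Ioc (0 : ℝ) 1, g p + 2 * c * ⟪w - p, u - p⟫ - g u ≤ θ * (c * ‖u - p‖ ^ 2) := by
    rintro θ ⟨hθ0, hθ1⟩
    have hmin := isMinOn_iff.mp hp (p + θ • (u - p)) (mem_univ _)
    have hconv : g (p + θ • (u - p)) ≤ (1 - θ) * g p + θ * g u := by
      have h := hg.2 (mem_univ p) (mem_univ u) (sub_nonneg.mpr hθ1) hθ0.le (sub_add_cancel 1 θ)
      rwa [show (1 - θ) • p + θ • u = p + θ • (u - p) by module] at h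
    have hnorm : ‖p + θ • (u - p) - w‖ ^ 2
        = ‖p - w‖ ^ 2 - 2 * θ * ⟪w - p, u - p⟫ + θ ^ 2 * ‖u - p‖ ^ 2 := by
      rw [show p + θ • (u - p) - w = (p - w) + θ • (u - p) by abel, norm_add_sq_real,
        real_inner_smul_right, norm_smul, mul_pow, Real.norm_eq_abs, sq_abs,
        ← neg_sub w p, inner_neg_left]
      ring
    rw [hnorm] at hmin
    have : θ * (g p + 2 * c * ⟪w - p, u - p⟫ - g u) ≤ θ * (θ * (c * ‖u - p‖ ^ 2)) := by
      nlinarith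
    exact le_of_mul_le_mul_left this hθ0
  have hlim : Tendsto (fun θ : ℝ => θ * (c * ‖u - p‖ ^ 2)) (𝓝[>] 0) (𝓝 0) := by
    simpa using ((continuous_mul_const _).tendsto' (0 : ℝ) 0 (zero_mul _)).mono_left
      nhdsWithin_le_nhds
  have := ge_of_tendsto hlim (eventually_of_mem (Ioc_mem_nhdsGT one_pos) hθ)
  linarith

theorem pgmL_fundamental_inequality [CompleteSpace E] {f g : E → ℝ} {f' prox : E → E} {L : ℝ}
    (hL : 0 < L) (hdiff : ∀ x, HasGradientAt f (f' x) x) (hconv : ConvexOn ℝ univ f)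
    (hlip : ∀ x y, ‖f' x - f' y‖ ≤ L * ‖x - y‖) (hg : ConvexOn ℝ univ g)
    (hprox : ∀ y, IsMinOn (fun z => g z + (1 / (2 * (1 / L))) * ‖z - y‖ ^ 2) univ (prox y))
    (z u : E) :
    f (z - (1 / L) • pgmL f' prox L z) + g (z - (1 / L) • pgmL f' prox L z)
      ≤ f u + g u + ⟪pgmL f' prox L z, z - u⟫ - 1 / (2 * L) * ‖pgmL f' prox L z‖ ^ 2 := by
  set p := prox (z - (1 / L) • f' z)
  have hf1 := le_add_inner_add_sq_of_lipschitz_gradient hdiff hlip z p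
  have hf2 := hconv.add_inner_le_of_hasGradientAt (hdiff z) u
  have hg1 := hg.add_inner_le_of_isMinOn_add_norm_sq (hprox (z - (1 / L) • f' z)) u
  rw [show 2 * (1 / (2 * (1 / L))) = L by field_simp] at hg1
  rw [show z - (1 / L) • pgmL f' prox L z = p by simp [pgmL, p, smul_smul, hL.ne'],
    show pgmL f' prox L z = L • (z - p) from rfl]
  simp only [inner_sub_left, inner_sub_right, real_inner_smul_left, norm_smul, mul_pow,
    norm_sub_sq_real, real_inner_self_eq_norm_sq, Real.norm_eq_abs, abs_of_pos hL] at *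
  rw [real_inner_comm z (f' z), real_inner_comm p (f' z), real_inner_comm p z,
    real_inner_comm u z, real_inner_comm u p] at *
  have hinv : L * L⁻¹ = 1 := mul_inv_cancel₀ hL.ne'
  -- in the coordinates `z, p, u, f' z` the claim is the sum of `hf1`, `hf2` and `hg1`
  linear_combination hf1 + hf2 + hg1
    + (⟪f' z, u⟫ - ⟪p, f' z⟫ + L / 2 * (‖p‖ ^ 2 - 2 * ⟪p, z⟫ + ‖z‖ ^ 2)) * hinv

theorem accelerated_potential_step {φ : E → ℝ} {L B b : ℝ} (hL : 0 < L) (hB : 0 ≤ B)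
    (hb : 0 ≤ b) {xstar y v x' y' G : E}
    (hineq : ∀ u, φ y' ≤ φ u + ⟪G, x' - u⟫ - 1 / (2 * L) * ‖G‖ ^ 2)
    (hx' : (B + b) • x' = B • y + b • v) :
    (B + b) * (φ y' - φ xstar) + L / 2 * ‖xstar - (v - (b / L) • G)‖ ^ 2
        + (B + b - b ^ 2) / (2 * L) * ‖G‖ ^ 2
      ≤ B * (φ y - φ xstar) + L / 2 * ‖xstar - v‖ ^ 2 := by
  have hinner : b * ⟪G, x' - xstar⟫ + B * ⟪G, x' - y⟫ = b * ⟪G, v - xstar⟫ := by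
    have h := congrArg (⟪G, ·⟫) hx'
    simp only [inner_add_right, real_inner_smul_right, inner_sub_right] at h ⊢
    linear_combination h
  have hnorm : L / 2 * ‖xstar - (v - (b / L) • G)‖ ^ 2
      = L / 2 * ‖xstar - v‖ ^ 2 - b * ⟪G, v - xstar⟫ + b ^ 2 / (2 * L) * ‖G‖ ^ 2 := by
    rw [show xstar - (v - (b / L) • G) = (xstar - v) + (b / L) • G by abel, norm_add_sq_real,
      real_inner_smul_right, norm_smul, mul_pow, Real.norm_eq_abs, sq_abs,
      ← neg_sub v xstar, inner_neg_left, real_inner_comm]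
    field_simp
    ring
  have hxstar := mul_le_mul_of_nonneg_left (hineq xstar) hb
  have hy := mul_le_mul_of_nonneg_left (hineq y) hB
  rw [hnorm]
  linear_combination hxstar + hy + hinner

theorem accelerated_potential_le {φ : E → ℝ} {L : ℝ} (hL : 0 < L) {B b a : ℕ → ℝ}
    (hB0 : B 0 = b 0) (hBsucc : ∀ k, B (k + 1) = B k + b (k + 1)) (hb : ∀ k, 0 ≤ b k)
    (ha : ∀ k, a k ≤ (B k - b k ^ 2) / (2 * L)) {xstar : E} {x y v G : ℕ → E}
    (hineq : ∀ k u, φ (y k) ≤ φ u + ⟪G k, x k - u⟫ - 1 / (2 * L) * ‖G k‖ ^ 2)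
    (hx0 : x 0 = v 0) (hv : ∀ k, v (k + 1) = v k - (b k / L) • G k)
    (hx : ∀ k, B (k + 1) • x (k + 1) = B k • y k + b (k + 1) • v (k + 1)) (k : ℕ) :
    B k * (φ (y k) - φ xstar) + L / 2 * ‖xstar - v (k + 1)‖ ^ 2
        + ∑ i ∈ Finset.range (k + 1), a i * ‖G i‖ ^ 2
      ≤ L / 2 * ‖xstar - v 0‖ ^ 2 := by
  have hBnn (k : ℕ) : 0 ≤ B k := by
    induction k with
    | zero => exact hB0 ▸ hb 0
    | succ k ih => exact hBsucc k ▸ add_nonneg ih (hb _)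
  have hgain (k : ℕ) : a k * ‖G k‖ ^ 2 ≤ (B k - b k ^ 2) / (2 * L) * ‖G k‖ ^ 2 :=
    mul_le_mul_of_nonneg_right (ha k) (sq_nonneg _)
  induction k with
  | zero =>
    -- the first iteration is the general step with `B = 0`
    have h := accelerated_potential_step (xstar := xstar) (y := y 0) hL le_rfl (hb 0) (hineq 0)
      (by rw [hx0, zero_smul, zero_add, zero_add])
    rw [zero_add, ← hv] at h
    have hgain0 := hgain 0
    rw [hB0] at hgain0 ⊢
    rw [Finset.sum_range_one]
    linarith
  | succ k ih =>
    have h := accelerated_potential_step (xstar := xstar) hL (hBnn k) (hb (k + 1))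
      (hineq (k + 1)) (by rw [← hBsucc]; exact hx k)
    rw [← hBsucc, ← hv] at h
    rw [Finset.sum_range_succ]
    linarith [hgain (k + 1)]

end

theorem exists_sum_mul_le_sum_mul {ι : Type*} {s : Finset ι} (hs : s.Nonempty) {w c : ι → ℝ}
    (hw : ∀ i ∈ s, 0 ≤ w i) : ∃ i ∈ s, (∑ j ∈ s, w j) * c i ≤ ∑ j ∈ s, w j * c j := by
  obtain ⟨i, hi, hmin⟩ := s.exists_min_image c hs
  refine ⟨i, hi, ?_⟩
  rw [Finset.sum_mul]
  exact Finset.sum_le_sum fun j hj => mul_le_mul_of_nonneg_left (hmin j hj) (hw j hj)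

theorem sum_range_succ_sq (n : ℕ) :
    ∑ i ∈ Finset.range (n + 1), ((i : ℝ) + 1) ^ 2 = ((n : ℝ) + 1) * (n + 2) * (2 * n + 3) / 6 := by
  induction n with
  | zero => norm_num
  | succ n ih =>
    rw [Finset.sum_range_succ, ih]
    push_cast
    ring

theorem exists_le_of_sum_sq_weighted_le {L C : ℝ} (hL : 0 < L) {c : ℕ → ℝ} {k : ℕ}
    (h : ∑ j ∈ Finset.range (k + 1), ((j : ℝ) + 1) ^ 2 / (32 * L) * c j ≤ C) :
    ∃ i ≤ k, c i ≤ 192 * L * C / (((k : ℝ) + 1) * (k + 2) * (2 * k + 3)) := by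
  obtain ⟨i, hi, hle⟩ := exists_sum_mul_le_sum_mul (Finset.nonempty_range_add_one (n := k))
    (w := fun j : ℕ => ((j : ℝ) + 1) ^ 2 / (32 * L)) (c := c) fun j _ => by positivity
  refine ⟨i, Finset.mem_range_succ_iff.mp hi, ?_⟩
  rw [← Finset.sum_div, sum_range_succ_sq, div_div, div_mul_eq_mul_div,
    div_le_iff₀ (by positivity)] at hle
  rw [le_div_iff₀ (by positivity)]
  linarith [mul_le_mul_of_nonneg_right h (by positivity : (0 : ℝ) ≤ 6 * (32 * L))]

/-- **Accelerated rates.** With `b_k = (k+1)/4`, `B_k = (k+1)(k+2)/8`, `a_k = (k+1)²/(32L)`, the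
condition `a_k ≤ (B_k - b_k²)/(2L)` holds for `k ≥ 1`, and with
`C̃ = a_0‖G(x⁰)‖² + b_0(φ(y⁰) - φ̄) + (L/2)‖x* - v⁰‖²` one has
`φ(y^k) - φ̄ ≤ 8C̃/((k+1)(k+2))` and `min_{0≤i≤k}‖G(x^i)‖² ≤ 192L·C̃/((k+1)(k+2)(2k+3))`. -/
theorem accelerated_rates
    {E : Type*} [NormedAddCommGroup E] [InnerProductSpace ℝ E] [FiniteDimensional ℝ E]
    (f : E → ℝ) (f' : E → E) (g : E → ℝ) (L : ℝ) (hL : 0 < L)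
    (hdiff : ∀ x, HasGradientAt f (f' x) x)
    (hconv : ConvexOn ℝ Set.univ f)
    (hlip : ∀ x y, ‖f' x - f' y‖ ≤ L * ‖x - y‖)
    (hg : ConvexOn ℝ Set.univ g)
    (prox : E → E)
    (hprox : ∀ y : E, IsMinOn
      (fun z => g z + (1 / (2 * (1 / L))) * ‖z - y‖ ^ 2) Set.univ (prox y))
    (xstar : E) (hmin : IsMinOn (fun z => f z + g z) Set.univ xstar)
    (B b a : ℕ → ℝ)
    (hB : ∀ k : ℕ, B k = ((k : ℝ) + 1) * ((k : ℝ) + 2) / 8)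
    (hb : ∀ k : ℕ, b k = ((k : ℝ) + 1) / 4)
    (ha : ∀ k : ℕ, a k = ((k : ℝ) + 1) ^ 2 / (32 * L))
    (x v y : ℕ → E) (hx0 : x 0 = v 0)
    (hy : ∀ k, y k = x k - (1 / L) • pgmL f' prox L (x k))
    (hv : ∀ k, v (k + 1) = v k - (b k / L) • pgmL f' prox L (x k))
    (hxk : ∀ k, x (k + 1) =
      (B k / B (k + 1)) • y k + (b (k + 1) / B (k + 1)) • v (k + 1)) :
    (∀ k : ℕ, 1 ≤ k → a k ≤ (B k - (b k) ^ 2) / (2 * L)) ∧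
    ∀ k : ℕ, 1 ≤ k →
      ((f (y k) + g (y k)) - (f xstar + g xstar)
          ≤ 8 * (a 0 * ‖pgmL f' prox L (x 0)‖ ^ 2
              + b 0 * ((f (y 0) + g (y 0)) - (f xstar + g xstar))
              + (L / 2) * ‖xstar - v 0‖ ^ 2) / (((k : ℝ) + 1) * ((k : ℝ) + 2))) ∧
      (∃ i ≤ k, ‖pgmL f' prox L (x i)‖ ^ 2
          ≤ 192 * L * (a 0 * ‖pgmL f' prox L (x 0)‖ ^ 2
              + b 0 * ((f (y 0) + g (y 0)) - (f xstar + g xstar))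
              + (L / 2) * ‖xstar - v 0‖ ^ 2)
            / (((k : ℝ) + 1) * ((k : ℝ) + 2) * (2 * (k : ℝ) + 3))) := by
  set φ : E → ℝ := fun z => f z + g z
  set G : ℕ → E := fun k => pgmL f' prox L (x k)
  have hBpos (k : ℕ) : 0 < B k := by rw [hB]; positivity
  have hBsucc (k : ℕ) : B (k + 1) = B k + b (k + 1) := by rw [hB, hB, hb]; push_cast; ring
  have hcond (k : ℕ) : a k ≤ (B k - b k ^ 2) / (2 * L) := by
    rw [ha, hB, hb, div_le_div_iff₀ (by positivity) (by positivity)]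
    nlinarith [(k.cast_nonneg : (0 : ℝ) ≤ k)]
  have hpot := accelerated_potential_le (φ := φ) (xstar := xstar) (G := G) hL
    (by rw [hB, hb]; norm_num) hBsucc (fun k => by rw [hb]; positivity) hcond
    (fun k u => hy k ▸ pgmL_fundamental_inequality hL hdiff hconv hlip hg hprox (x k) u) hx0 hv
    (fun k => by rw [hxk k, smul_add, smul_smul, smul_smul, mul_div_cancel₀ _ (hBpos _).ne',
      mul_div_cancel₀ _ (hBpos _).ne'])
  have hgap (z : E) : 0 ≤ φ z - φ xstar := sub_nonneg.mpr (isMinOn_iff.mp hmin z trivial)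
  have ha_nonneg (k : ℕ) : 0 ≤ a k := by rw [ha]; positivity
  have hC : L / 2 * ‖xstar - v 0‖ ^ 2 ≤ a 0 * ‖G 0‖ ^ 2 + b 0 * (φ (y 0) - φ xstar)
      + L / 2 * ‖xstar - v 0‖ ^ 2 :=
    le_add_of_nonneg_left (add_nonneg (mul_nonneg (ha_nonneg 0) (sq_nonneg _))
      (mul_nonneg (by rw [hb]; positivity) (hgap _)))
  refine ⟨fun k _ => hcond k, fun k _ => ?_⟩
  have hpot_k := hpot k
  have hdist : 0 ≤ L / 2 * ‖xstar - v (k + 1)‖ ^ 2 := by positivity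
  constructor
  · have hsum : 0 ≤ ∑ i ∈ Finset.range (k + 1), a i * ‖G i‖ ^ 2 :=
      Finset.sum_nonneg fun i _ => mul_nonneg (ha_nonneg i) (sq_nonneg _)
    rw [le_div_iff₀ (by positivity)]
    rw [hB] at hpot_k
    linarith
  · apply exists_le_of_sum_sq_weighted_le hL
    simp_rw [← ha]
    linarith [mul_nonneg (hBpos k).le (hgap (y k))]
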